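/- arXiv:1806.08262 — 4 statements merged into one kernel-verified Lean document; each statement's English description precedes it below -/
import Mathlib

section
/- There is a universal constant C > 0 with the following property. Let d be an even positive integer, let δ ≤ d/4, let a and L be positive integers with d = aL and 1 ≤ a < δ, let m_1,…,m_K ∈ ℂ^d be masks whose nonzero entries all lie in positions {1,…,δ} with ‖m‖_∞ := max_{1≤k≤K} ‖m_k‖_∞ > 0, and let 0 < p ≤ q. Suppose B : ℝ^{K×L} → ℂ^d satisfies D₂(B(y), B(y′)) ≤ C_B‖y − y′‖₂ for all y, y′ ∈ ℝ^{K×L} and B(Z(x)) ∼ x for every x ∈ C_{p,q}. Then C_B ≥ C·q·√(d·a) / (p·√K·‖m‖_∞·δ^{3/2}). -/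
open scoped BigOperators

noncomputable section

/-- Map an integer to `Fin d` by reduction mod `d` (requires `0 < d`). -/
def intToFin (d : ℕ) (hd : 0 < d) (z : ℤ) : Fin d :=
  ⟨(z % (d : ℤ)).toNat, by
    have h1 : 0 ≤ z % (d : ℤ) := Int.emod_nonneg z (by exact_mod_cast hd.ne')
    have h2 : z % (d : ℤ) < (d : ℤ) := Int.emod_lt_of_pos z (by exact_mod_cast hd)
    omega⟩

/-- Circular shift: `(S_ℓ x)(n) = x(((n + ℓ - 1) mod d) + 1)` in 1-based indexing. -/
def shift {d : ℕ} (ℓ : ℤ) (x : Fin d → ℂ) : Fin d → ℂ :=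
  fun i => x (intToFin d i.pos ((i : ℤ) + ℓ))

/-- `⟨u,v⟩ = ∑ u(n) conj(v(n))`. -/
def innerC {d : ℕ} (u v : Fin d → ℂ) : ℂ := ∑ n, u n * (starRingEnd ℂ) (v n)

/-- `x ∼ x'` iff `x = e^{iθ} x'` for some real `θ`. -/
def phaseEquiv {d : ℕ} (x x' : Fin d → ℂ) : Prop :=
  ∃ θ : ℝ, x = fun n => Complex.exp (θ * Complex.I) * x' n

/-- Euclidean norm on `ℂ^d`. -/
def norm2 {d : ℕ} (x : Fin d → ℂ) : ℝ := Real.sqrt (∑ n, ‖x n‖ ^ 2)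

/-- `D₂(x,x') = min_θ ‖x - e^{iθ} x'‖₂`. -/
def D2 {d : ℕ} (x x' : Fin d → ℂ) : ℝ :=
  ⨅ θ : ℝ, norm2 (fun n => x n - Complex.exp (θ * Complex.I) * x' n)

/-- `C_{p,q} = {x : p ≤ |x(n)| ≤ q for all n}`. -/
def Cpq (d : ℕ) (p q : ℝ) : Set (Fin d → ℂ) :=
  {x | ∀ n, p ≤ ‖x n‖ ∧ ‖x n‖ ≤ q}

/-- `‖m‖_∞ = max_k ‖m_k‖_∞`. -/
def maskSup {d K : ℕ} (m : Fin K → Fin d → ℂ) : ℝ :=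
  ⨆ k, ⨆ n, ‖m k n‖

/-- The measurement map `Z(x)_{k,ℓ} = |⟨S_{ℓa} m_k, x⟩|`, `1 ≤ k ≤ K`, `1 ≤ ℓ ≤ L`. -/
def Zmap {d K : ℕ} (L : ℕ) (m : Fin K → Fin d → ℂ) (a : ℕ) (x : Fin d → ℂ) :
    EuclideanSpace ℝ (Fin K × Fin L) :=
  WithLp.toLp 2 fun kl => ‖innerC (shift ((((kl.2 : ℕ) + 1) * a : ℕ) : ℤ) (m kl.1)) x‖

/-- The measurement map `Y(x)_{k,ℓ} = |⟨S_{ℓa} m_k, x⟩|²`. -/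
def Ymap {d K : ℕ} (L : ℕ) (m : Fin K → Fin d → ℂ) (a : ℕ) (x : Fin d → ℂ) :
    EuclideanSpace ℝ (Fin K × Fin L) :=
  WithLp.toLp 2 fun kl => ‖innerC (shift ((((kl.2 : ℕ) + 1) * a : ℕ) : ℤ) (m kl.1)) x‖ ^ 2

/-- The vectors `x^{±}` (sign `ε = ±1`): `q` on positions `1,…,d/2-δ`, `p` on
`d/2-δ+1,…,d/2`, `±q` on `d/2+1,…,d-δ`, and `p` on `d-δ+1,…,d`. -/
def xpm (d δ : ℕ) (p q ε : ℝ) : Fin d → ℂ :=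
  fun i => if (i : ℕ) < d / 2 - δ then (q : ℂ)
    else if (i : ℕ) < d / 2 then (p : ℂ)
    else if (i : ℕ) < d - δ then ((ε * q : ℝ) : ℂ)
    else (p : ℂ)

/-- The difference of outer products `x x^* - x' x'^*`. -/
def outerDiff {d : ℕ} (x x' : Fin d → ℂ) : Matrix (Fin d) (Fin d) ℂ :=
  Matrix.of fun i j => x i * star (x j) - x' i * star (x' j)

lemma outerDiff_isHermitian {d : ℕ} (x x' : Fin d → ℂ) :
    (outerDiff x x').IsHermitian := by
  unfold Matrix.IsHermitian
  ext i j
  simp [outerDiff, Matrix.conjTranspose_apply, star_sub, star_mul, star_star, mul_comm]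

/-- `d₁(x,x') = ‖x x^* - x' x'^*‖₁`, the sum of the singular values (for a Hermitian
matrix, the sum of the absolute values of its eigenvalues). -/
def d1 {d : ℕ} (x x' : Fin d → ℂ) : ℝ :=
  ∑ i, |(outerDiff_isHermitian x x').eigenvalues i|

/-!
The two vectors `x± = xpm d δ p q (±1)` lie in `C_{p,q}` and differ only by a sign on the block
`[d/2, d - δ)`, where they equal `±q`; pairing that block with the block `[0, d/2 - δ)`, where both
equal `q`, the parallelogram law gives `D₂(x⁺, x⁻) ≥ q √d`. A measurement `|⟨S_{ℓa} m_k, x±⟩|` only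
sees a cyclic window of `δ` coordinates, so it is the same for both vectors unless the window
straddles an end of the block; around each end both vectors equal `p`, and then the two values
differ by at most `2pδ‖m‖_∞`. At most `4δ/a` of the shifts straddle, whence
`a ‖Z(x⁺) - Z(x⁻)‖² ≤ 16 K p² δ³ ‖m‖_∞²`, and the Lipschitz bound on `B` gives the claim with
`C = 1/4`.
-/

open Finset

lemma intToFin_natCast_add_val (d : ℕ) (hd : 0 < d) (n t : ℕ) :
    (intToFin d hd ((n : ℤ) + (t : ℤ)) : ℕ) = (n + t) % d := by
  simp only [intToFin]
  rw [← Nat.cast_add, ← Int.natCast_mod, Int.toNat_natCast]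

lemma bijective_intToFin_add (d : ℕ) (ℓ : ℤ) :
    Function.Bijective fun i : Fin d => intToFin d i.pos ((i : ℤ) + ℓ) := by
  refine Finite.injective_iff_bijective.mp fun i j hij => ?_
  have hmod : ((i : ℤ) + ℓ) % d = ((j : ℤ) + ℓ) % d := by
    have h := congrArg Fin.val hij
    simp only [intToFin] at h
    have := Int.emod_nonneg ((i : ℤ) + ℓ) (by exact_mod_cast i.pos.ne' : (d : ℤ) ≠ 0)
    have := Int.emod_nonneg ((j : ℤ) + ℓ) (by exact_mod_cast i.pos.ne' : (d : ℤ) ≠ 0)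
    omega
  have h := Int.ModEq.add_right_cancel' ℓ hmod
  rw [Int.ModEq, Int.emod_eq_of_lt (by positivity) (by exact_mod_cast i.isLt),
    Int.emod_eq_of_lt (by positivity) (by exact_mod_cast j.isLt)] at h
  exact Fin.ext (by exact_mod_cast h)

lemma sum_comp_shift {M : Type*} [AddCommMonoid M] {d : ℕ} (ℓ : ℤ) (x : Fin d → ℂ)
    (f : ℂ → M) : ∑ n, f (shift ℓ x n) = ∑ n, f (x n) :=
  (bijective_intToFin_add d ℓ).sum_comp fun i => f (x i)

lemma add_mod_lt_cases {d δ n t : ℕ} (hn : n < d) (htd : t ≤ d) (h : (n + t) % d < δ) :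
    (d - t ≤ n ∧ n + t < d + δ) ∨ n + t < δ := by
  rcases lt_or_ge (n + t) d with hlt | hge
  · rw [Nat.mod_eq_of_lt hlt] at h
    exact Or.inr h
  · rw [Nat.mod_eq_sub_mod hge, Nat.mod_eq_of_lt (by omega)] at h
    omega

lemma mod_lt_of_shift_ne_zero {d δ : ℕ} {w : Fin d → ℂ} (hw : ∀ n, w n ≠ 0 → (n : ℕ) < δ)
    {t : ℕ} {n : Fin d} (h : shift (t : ℤ) w n ≠ 0) : ((n : ℕ) + t) % d < δ := by
  have := hw _ h
  rwa [intToFin_natCast_add_val] at this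

lemma sum_norm_le_of_support {d δ : ℕ} {w : Fin d → ℂ} {M : ℝ}
    (hw : ∀ n, w n ≠ 0 → (n : ℕ) < δ) (hM : ∀ n, ‖w n‖ ≤ M) (hM0 : 0 ≤ M) :
    ∑ n, ‖w n‖ ≤ δ * M :=
  calc ∑ n, ‖w n‖ = ∑ n ∈ univ.filter (fun n : Fin d => (n : ℕ) < δ), ‖w n‖ :=
        (sum_filter_of_ne fun n _ h => hw n (norm_ne_zero_iff.mp h)).symm
    _ ≤ #(univ.filter fun n : Fin d => (n : ℕ) < δ) • M :=
        sum_le_card_nsmul _ _ _ fun n _ => hM n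
    _ ≤ δ * M := by
        rw [Fin.card_filter_val_lt, nsmul_eq_mul]
        gcongr
        exact_mod_cast min_le_right d δ

lemma innerC_congr {d : ℕ} {u x y : Fin d → ℂ} (h : ∀ n, u n ≠ 0 → x n = y n) :
    innerC u x = innerC u y :=
  sum_congr rfl fun n _ => by by_cases hn : u n = 0 <;> simp [hn, h]

lemma innerC_neg {d : ℕ} (u x : Fin d → ℂ) : innerC u (fun n => -x n) = -innerC u x := by
  simp [innerC, sum_neg_distrib]

lemma abs_norm_innerC_sub_norm_innerC_le {d : ℕ} (u x y : Fin d → ℂ) :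
    |‖innerC u x‖ - ‖innerC u y‖| ≤ ∑ n, ‖u n‖ * ‖x n + y n‖ :=
  calc |‖innerC u x‖ - ‖innerC u y‖| = |‖innerC u x‖ - ‖-innerC u y‖| := by rw [norm_neg]
    _ ≤ ‖innerC u x + innerC u y‖ := by simpa using abs_norm_sub_norm_le (innerC u x) (-innerC u y)
    _ = ‖∑ n, u n * starRingEnd ℂ (x n + y n)‖ := by
        simp [innerC, mul_add, sum_add_distrib]
    _ ≤ ∑ n, ‖u n‖ * ‖x n + y n‖ :=
        (norm_sum_le _ _).trans_eq (by simp only [norm_mul, Complex.norm_conj])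

lemma norm2_const_mul {d : ℕ} (u : ℂ) (z : Fin d → ℂ) :
    norm2 (fun n => u * z n) = ‖u‖ * norm2 z := by
  simp only [norm2, norm_mul, mul_pow, ← Finset.mul_sum]
  rw [Real.sqrt_mul (by positivity), Real.sqrt_sq (norm_nonneg u)]

lemma le_D2_of_phaseEquiv {d : ℕ} {x x' y y' : Fin d → ℂ} {r : ℝ} (hy : phaseEquiv y x)
    (hy' : phaseEquiv y' x') (h : ∀ c : ℂ, ‖c‖ = 1 → r ≤ norm2 (fun n => x n - c * x' n)) :
    r ≤ D2 y y' := by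
  obtain ⟨α, rfl⟩ := hy
  obtain ⟨β, rfl⟩ := hy'
  refine le_ciInf fun θ => ?_
  set c := Complex.exp (((θ + β - α : ℝ) : ℂ) * Complex.I)
  have hc : Complex.exp (α * Complex.I) * c =
      Complex.exp (θ * Complex.I) * Complex.exp (β * Complex.I) := by
    rw [← Complex.exp_add, ← Complex.exp_add]
    push_cast
    ring_nf
  calc r ≤ norm2 (fun n => x n - c * x' n) := h c (Complex.norm_exp_ofReal_mul_I _)
    _ = norm2 (fun n => Complex.exp (α * Complex.I) * (x n - c * x' n)) := by
        rw [norm2_const_mul, Complex.norm_exp_ofReal_mul_I, one_mul]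
    _ = _ := by
        congr 1
        funext n
        linear_combination (-x' n) * hc

lemma xpm_mem_Cpq {d δ : ℕ} {p q ε : ℝ} (hp : 0 ≤ p) (hpq : p ≤ q) (hε : |ε| = 1) :
    xpm d δ p q ε ∈ Cpq d p q := by
  have hq : 0 ≤ q := hp.trans hpq
  intro n
  unfold xpm
  split_ifs <;> simp [hε, abs_of_nonneg hp, abs_of_nonneg hq, hpq]

lemma xpm_neg_one_of_mem {d δ : ℕ} {p q : ℝ} {n : Fin d} (hn : d / 2 ≤ n ∧ (n : ℕ) < d - δ) :
    xpm d δ p q (-1) n = -xpm d δ p q 1 n := by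
  simp only [xpm, if_neg (show ¬(n : ℕ) < d / 2 - δ by omega),
    if_neg (show ¬(n : ℕ) < d / 2 by omega), if_pos hn.2]
  push_cast
  ring

lemma xpm_neg_one_of_not_mem {d δ : ℕ} {p q : ℝ} {n : Fin d}
    (hn : ¬(d / 2 ≤ n ∧ (n : ℕ) < d - δ)) : xpm d δ p q (-1) n = xpm d δ p q 1 n := by
  unfold xpm
  split_ifs <;> first | rfl | omega

lemma xpm_eq_p {d δ : ℕ} {p q ε : ℝ} {n : Fin d}
    (hn : (d / 2 - δ ≤ n ∧ (n : ℕ) < d / 2) ∨ d - δ ≤ n) : xpm d δ p q ε n = p := by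
  unfold xpm
  split_ifs <;> first | rfl | omega

lemma mul_sqrt_le_norm2_xpm_sub {d δ : ℕ} {p q : ℝ} {c : ℂ} (hd : Even d) (hδ : 4 * δ ≤ d)
    (hq : 0 ≤ q) (hc : ‖c‖ = 1) :
    q * √d ≤ norm2 (fun n => xpm d δ p q 1 n - c * xpm d δ p q (-1) n) := by
  set f : ℕ → ℝ := fun i =>
    if h : i < d then ‖xpm d δ p q 1 ⟨i, h⟩ - c * xpm d δ p q (-1) ⟨i, h⟩‖ ^ 2 else 0
  -- coordinates `i` and `d/2 + i` contribute `q²‖1 - c‖²` and `q²‖1 + c‖²`, summing to `4q²`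
  have hpair : ∀ i ∈ range (d / 2 - δ), f i + f (d / 2 + i) = 4 * q ^ 2 := by
    intro i hi
    rw [mem_range] at hi
    have hpar := parallelogram_law_with_norm ℝ (1 : ℂ) c
    simp only [f, dif_pos (show i < d by omega), dif_pos (show d / 2 + i < d by omega), xpm,
      if_pos hi, if_neg (show ¬d / 2 + i < d / 2 - δ by omega),
      if_neg (show ¬d / 2 + i < d / 2 by omega), if_pos (show d / 2 + i < d - δ by omega)]
    rw [norm_one, hc] at hpar
    calc _ = ‖((q : ℝ) : ℂ)‖ ^ 2 * (‖1 + c‖ ^ 2 + ‖1 - c‖ ^ 2) := by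
          rw [mul_add, ← mul_pow, ← mul_pow, ← norm_mul, ← norm_mul]
          push_cast
          ring_nf
      _ = 4 * q ^ 2 := by rw [hpar, Complex.norm_real, Real.norm_eq_abs, sq_abs]; ring
  have hsum : (d : ℝ) * q ^ 2 ≤ ∑ n, ‖xpm d δ p q 1 n - c * xpm d δ p q (-1) n‖ ^ 2 :=
    calc (d : ℝ) * q ^ 2 ≤ ((d / 2 - δ : ℕ) : ℝ) * (4 * q ^ 2) := by
          rw [← mul_assoc]
          gcongr
          exact_mod_cast (show d ≤ (d / 2 - δ) * 4 by obtain ⟨r, rfl⟩ := hd; omega)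
      _ = ∑ i ∈ range (d / 2 - δ), (f i + f (d / 2 + i)) := by
          rw [sum_congr rfl hpair, sum_const, card_range, nsmul_eq_mul]
      _ ≤ ∑ i ∈ range (d / 2), (f i + f (d / 2 + i)) :=
          sum_le_sum_of_subset_of_nonneg (range_mono (Nat.sub_le _ _)) fun i _ _ => by
            simp only [f]
            split_ifs <;> positivity
      _ = ∑ i ∈ range d, f i := by
          rw [sum_add_distrib, ← sum_range_add, ← two_mul, Nat.two_mul_div_two_of_even hd]
      _ = _ :=
          (sum_fin_eq_sum_range fun n => ‖xpm d δ p q 1 n - c * xpm d δ p q (-1) n‖ ^ 2).symm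
  calc q * √d = √((d : ℝ) * q ^ 2) := by
        rw [Real.sqrt_mul (Nat.cast_nonneg _), Real.sqrt_sq hq, mul_comm]
    _ ≤ _ := Real.sqrt_le_sqrt hsum

/-- The cyclic window `{b, …, b + δ - 1}` (0-based) meets both the block `[d/2, d - δ)`, on which
`xpm d δ p q 1` and `xpm d δ p q (-1)` differ by a sign, and its complement. -/
def Straddles (d δ b : ℕ) : Prop :=
  (d / 2 - δ < b ∧ b < d / 2) ∨ (d - 2 * δ < b ∧ b < d - δ)

instance (d δ b : ℕ) : Decidable (Straddles d δ b) :=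
  inferInstanceAs (Decidable (_ ∨ _))

lemma window_subset_or_disjoint {d δ t : ℕ} (hδ : 4 * δ ≤ d) (ht : 0 < t) (htd : t ≤ d)
    (h : ¬Straddles d δ (d - t)) :
    (∀ n < d, (n + t) % d < δ → d / 2 ≤ n ∧ n < d - δ) ∨
      (∀ n < d, (n + t) % d < δ → ¬(d / 2 ≤ n ∧ n < d - δ)) := by
  unfold Straddles at h
  by_cases hin : d / 2 ≤ d - t ∧ d - t + δ ≤ d - δ
  · exact Or.inl fun n hn hw => by rcases add_mod_lt_cases hn htd hw with h' | h' <;> omega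
  · exact Or.inr fun n hn hw => by rcases add_mod_lt_cases hn htd hw with h' | h' <;> omega

lemma window_sdiff_subset {d δ t n : ℕ} (hδ : 4 * δ ≤ d) (htd : t ≤ d)
    (h : Straddles d δ (d - t)) (hn : n < d) (hw : (n + t) % d < δ)
    (hS : ¬(d / 2 ≤ n ∧ n < d - δ)) : (d / 2 - δ ≤ n ∧ n < d / 2) ∨ d - δ ≤ n := by
  unfold Straddles at h
  rcases add_mod_lt_cases hn htd hw with h' | h' <;> omega

lemma sq_sub_norm_innerC_shift_xpm_le {d δ t : ℕ} {w : Fin d → ℂ} {M p q : ℝ}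
    (hδ : 4 * δ ≤ d) (ht : 0 < t) (htd : t ≤ d) (hw : ∀ n, w n ≠ 0 → (n : ℕ) < δ)
    (hM : ∀ n, ‖w n‖ ≤ M) (hM0 : 0 ≤ M) (hp : 0 ≤ p) :
    (‖innerC (shift (t : ℤ) w) (xpm d δ p q 1)‖ -
        ‖innerC (shift (t : ℤ) w) (xpm d δ p q (-1))‖) ^ 2 ≤
      if Straddles d δ (d - t) then (2 * p * δ * M) ^ 2 else 0 := by
  split_ifs with h
  · have hpt : ∀ n, ‖shift (t : ℤ) w n‖ * ‖xpm d δ p q 1 n + xpm d δ p q (-1) n‖ ≤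
        ‖shift (t : ℤ) w n‖ * (2 * p) := by
      intro n
      by_cases hn : shift (t : ℤ) w n = 0
      · simp [hn]
      gcongr
      by_cases hS : d / 2 ≤ n ∧ (n : ℕ) < d - δ
      · rw [xpm_neg_one_of_mem hS, add_neg_cancel, norm_zero]
        positivity
      · rw [xpm_neg_one_of_not_mem hS,
          xpm_eq_p (window_sdiff_subset hδ htd h n.isLt (mod_lt_of_shift_ne_zero hw hn) hS)]
        simpa [abs_of_nonneg hp, two_mul] using norm_add_le (p : ℂ) p
    have habs := calc
      |‖innerC (shift (t : ℤ) w) (xpm d δ p q 1)‖ - ‖innerC (shift (t : ℤ) w) (xpm d δ p q (-1))‖|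
          ≤ ∑ n, ‖shift (t : ℤ) w n‖ * ‖xpm d δ p q 1 n + xpm d δ p q (-1) n‖ :=
            abs_norm_innerC_sub_norm_innerC_le _ _ _
      _ ≤ ∑ n, ‖shift (t : ℤ) w n‖ * (2 * p) := sum_le_sum fun n _ => hpt n
      _ = 2 * p * ∑ n, ‖w n‖ := by rw [← sum_mul, sum_comp_shift _ _ norm, mul_comm]
      _ ≤ 2 * p * (δ * M) := by gcongr; exact sum_norm_le_of_support hw hM hM0
    rw [← sq_abs]
    exact pow_le_pow_left₀ (abs_nonneg _) (habs.trans_eq (by ring)) 2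
  · suffices ‖innerC (shift (t : ℤ) w) (xpm d δ p q 1)‖ =
        ‖innerC (shift (t : ℤ) w) (xpm d δ p q (-1))‖ by simp [this]
    rcases window_subset_or_disjoint hδ ht htd h with hin | hout
    · rw [innerC_congr (x := xpm d δ p q (-1)) (y := fun n => -xpm d δ p q 1 n)
        fun n hn => xpm_neg_one_of_mem (hin n n.isLt (mod_lt_of_shift_ne_zero hw hn)),
        innerC_neg, norm_neg]
    · rw [innerC_congr (x := xpm d δ p q (-1)) (y := xpm d δ p q 1)
        fun n hn => xpm_neg_one_of_not_mem (hout n n.isLt (mod_lt_of_shift_ne_zero hw hn))]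

lemma card_filter_mul_mem_Ioo_mul_le {ι : Type*} (s : Finset ι) {f : ι → ℕ}
    (hf : Set.InjOn f s) {a : ℕ} (ha : 0 < a) (u w : ℕ) :
    #(s.filter fun i => u < a * f i ∧ a * f i < u + w) * a ≤ w + a := by
  have hcard : #(s.filter fun i => u < a * f i ∧ a * f i < u + w) ≤
      #(Icc (u / a + 1) ((u + w) / a)) := by
    refine card_le_card_of_injOn f (fun i hi => ?_) (hf.mono (filter_subset _ _))
    obtain ⟨-, hlo, hhi⟩ := mem_filter.mp hi
    rw [coe_Icc, Set.mem_Icc, Nat.add_one_le_iff, Nat.div_lt_iff_lt_mul ha,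
      Nat.le_div_iff_mul_le ha, mul_comm (f i)]
    exact ⟨hlo, hhi.le⟩
  rw [Nat.card_Icc] at hcard
  have hmul := Nat.mul_le_mul_right a hcard
  rw [Nat.sub_mul] at hmul
  have hhi := Nat.div_mul_le_self (u + w) a
  have hlo := Nat.lt_div_mul_add (a := u) ha
  rw [add_mul, add_mul, one_mul] at hmul
  omega

lemma card_filter_straddles_mul_le {d δ a L : ℕ} (hdal : d = a * L) (ha : 0 < a) (haδ : a ≤ δ)
    (hδ : 4 * δ ≤ d) :
    #(univ.filter fun ℓ : Fin L => Straddles d δ (d - ((ℓ : ℕ) + 1) * a)) * a ≤ 4 * δ := by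
  have hrev : ∀ ℓ : Fin L, d - ((ℓ : ℕ) + 1) * a = a * ℓ.rev := by
    intro ℓ
    rw [Fin.val_rev, hdal, Nat.mul_sub, mul_comm ((ℓ : ℕ) + 1)]
  have hinj : Set.InjOn (fun ℓ : Fin L => (ℓ.rev : ℕ)) (univ : Finset (Fin L)) :=
    fun x _ y _ hxy => Fin.rev_injective (Fin.ext hxy)
  have hsub : (univ.filter fun ℓ : Fin L => Straddles d δ (d - ((ℓ : ℕ) + 1) * a)) ⊆
      (univ.filter fun ℓ : Fin L => d / 2 - δ < a * ℓ.rev ∧ a * ℓ.rev < d / 2 - δ + δ) ∪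
      (univ.filter fun ℓ : Fin L => d - 2 * δ < a * ℓ.rev ∧ a * ℓ.rev < d - 2 * δ + δ) := by
    intro ℓ
    simp only [mem_filter, mem_univ, true_and, mem_union, Straddles, hrev]
    omega
  calc _ ≤ (#(univ.filter fun ℓ : Fin L => d / 2 - δ < a * ℓ.rev ∧ a * ℓ.rev < d / 2 - δ + δ) +
        #(univ.filter fun ℓ : Fin L => d - 2 * δ < a * ℓ.rev ∧ a * ℓ.rev < d - 2 * δ + δ)) * a :=
        Nat.mul_le_mul_right _ ((card_le_card hsub).trans (card_union_le _ _))
    _ ≤ (δ + a) + (δ + a) := by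
        rw [add_mul]
        exact add_le_add (card_filter_mul_mem_Ioo_mul_le _ hinj ha _ _)
          (card_filter_mul_mem_Ioo_mul_le _ hinj ha _ _)
    _ ≤ 4 * δ := by omega

lemma norm_le_maskSup {d K : ℕ} (m : Fin K → Fin d → ℂ) (k : Fin K) (n : Fin d) :
    ‖m k n‖ ≤ maskSup m :=
  (le_ciSup (Finite.bddAbove_range _) n).trans
    (le_ciSup (f := fun k => ⨆ n, ‖m k n‖) (Finite.bddAbove_range _) k)

lemma pos_of_maskSup_pos {d K : ℕ} {m : Fin K → Fin d → ℂ} (h : 0 < maskSup m) : 0 < K :=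
  Nat.pos_of_ne_zero fun hK => by subst hK; simp [maskSup] at h

lemma mul_norm_Zmap_xpm_sub_sq_le {d δ a L K : ℕ} {m : Fin K → Fin d → ℂ} {M p q : ℝ}
    (hdal : d = a * L) (ha : 0 < a) (haδ : a ≤ δ) (hδ : 4 * δ ≤ d)
    (hsupp : ∀ k n, m k n ≠ 0 → (n : ℕ) < δ) (hM : ∀ k n, ‖m k n‖ ≤ M) (hM0 : 0 ≤ M)
    (hp : 0 ≤ p) :
    a * ‖Zmap L m a (xpm d δ p q 1) - Zmap L m a (xpm d δ p q (-1))‖ ^ 2 ≤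
      16 * K * p ^ 2 * δ ^ 3 * M ^ 2 := by
  set E := (2 * p * δ * M) ^ 2
  have hentry : ∀ k ℓ,
      ‖(Zmap L m a (xpm d δ p q 1) - Zmap L m a (xpm d δ p q (-1))) (k, ℓ)‖ ^ 2 ≤
        if Straddles d δ (d - ((ℓ : ℕ) + 1) * a) then E else 0 := by
    intro k ℓ
    have htd : ((ℓ : ℕ) + 1) * a ≤ d := by
      rw [hdal, mul_comm a]
      exact Nat.mul_le_mul_right a ℓ.isLt
    simpa [Zmap] using sq_sub_norm_innerC_shift_xpm_le (q := q) hδ (by positivity) htd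
      (hsupp k) (hM k) hM0 hp
  calc _ = a * ∑ k : Fin K, ∑ ℓ : Fin L,
        ‖(Zmap L m a (xpm d δ p q 1) - Zmap L m a (xpm d δ p q (-1))) (k, ℓ)‖ ^ 2 := by
        rw [EuclideanSpace.norm_sq_eq, Fintype.sum_prod_type]
    _ ≤ a * ∑ _k : Fin K, ∑ ℓ : Fin L,
        if Straddles d δ (d - ((ℓ : ℕ) + 1) * a) then E else 0 := by
        gcongr with k _ ℓ _
        exact hentry k ℓ
    _ = K * (#(univ.filter fun ℓ : Fin L => Straddles d δ (d - ((ℓ : ℕ) + 1) * a)) * a : ℕ) *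
          E := by
        rw [← sum_filter, sum_const, sum_const, card_univ, Fintype.card_fin]
        push_cast
        simp only [nsmul_eq_mul]
        ring
    _ ≤ K * (4 * δ : ℕ) * E := by
        gcongr _ * ?_ * _
        exact_mod_cast card_filter_straddles_mul_le hdal ha haδ hδ
    _ = 16 * K * p ^ 2 * δ ^ 3 * M ^ 2 := by
        push_cast
        ring

lemma sqrt_mul_norm_Zmap_xpm_sub_le {d δ a L K : ℕ} {m : Fin K → Fin d → ℂ} {M p q : ℝ}
    (hdal : d = a * L) (ha : 0 < a) (haδ : a ≤ δ) (hδ : 4 * δ ≤ d)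
    (hsupp : ∀ k n, m k n ≠ 0 → (n : ℕ) < δ) (hM : ∀ k n, ‖m k n‖ ≤ M) (hM0 : 0 ≤ M)
    (hp : 0 ≤ p) :
    √a * ‖Zmap L m a (xpm d δ p q 1) - Zmap L m a (xpm d δ p q (-1))‖ ≤
      4 * p * √K * M * δ ^ ((3 : ℝ) / 2) := by
  have hδ32 : ((δ : ℝ) ^ ((3 : ℝ) / 2)) ^ 2 = δ ^ 3 := by
    rw [← Real.rpow_mul_natCast (Nat.cast_nonneg _)]
    norm_num
  refine (pow_le_pow_iff_left₀ (by positivity) (by positivity) two_ne_zero).mp ?_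
  calc _ = a * ‖Zmap L m a (xpm d δ p q 1) - Zmap L m a (xpm d δ p q (-1))‖ ^ 2 := by
        rw [mul_pow, Real.sq_sqrt (Nat.cast_nonneg _)]
    _ ≤ 16 * K * p ^ 2 * δ ^ 3 * M ^ 2 :=
        mul_norm_Zmap_xpm_sub_sq_le hdal ha haδ hδ hsupp hM hM0 hp
    _ = _ := by
        rw [mul_pow, mul_pow, mul_pow, mul_pow, Real.sq_sqrt (Nat.cast_nonneg _), hδ32]
        ring

/-- Lower Lipschitz bound for recovery from the `Z`-measurements
with arbitrary locally supported masks. -/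
theorem lower_lipschitz_Z : ∃ C : ℝ, 0 < C ∧
    ∀ (d δ a L K : ℕ) (m : Fin K → Fin d → ℂ) (p q CB : ℝ)
      (B : EuclideanSpace ℝ (Fin K × Fin L) → (Fin d → ℂ)),
      0 < d → Even d → 4 * δ ≤ d → 0 < a → 0 < L → d = a * L → 1 ≤ a → a < δ →
      (∀ k n, m k n ≠ 0 → (n : ℕ) < δ) →
      0 < maskSup m →
      0 < p → p ≤ q →
      (∀ y y', D2 (B y) (B y') ≤ CB * ‖y - y'‖) →
      (∀ x ∈ Cpq d p q, phaseEquiv (B (Zmap L m a x)) x) →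
      C * q * Real.sqrt ((d : ℝ) * a) /
          (p * Real.sqrt K * maskSup m * (δ : ℝ) ^ ((3 : ℝ) / 2)) ≤ CB := by
  refine ⟨1 / 4, by norm_num, fun d δ a L K m p q CB B hd hde hδ ha _ hdal _ haδ hsupp hMpos hp
    hpq hlip hrec => ?_⟩
  set M := maskSup m
  set Zdiff := Zmap L m a (xpm d δ p q 1) - Zmap L m a (xpm d δ p q (-1))
  have hK := pos_of_maskSup_pos hMpos
  have hlow : q * √d ≤ CB * ‖Zdiff‖ :=
    (le_D2_of_phaseEquiv (hrec _ (xpm_mem_Cpq hp.le hpq (by norm_num)))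
      (hrec _ (xpm_mem_Cpq hp.le hpq (by norm_num)))
      fun c hc => mul_sqrt_le_norm2_xpm_sub hde hδ (hp.le.trans hpq) hc).trans (hlip _ _)
  have hCB : 0 < CB :=
    pos_of_mul_pos_left ((mul_pos (hp.trans_le hpq) (by positivity)).trans_le hlow) (norm_nonneg _)
  have hup : √a * ‖Zdiff‖ ≤ 4 * p * √K * M * δ ^ ((3 : ℝ) / 2) :=
    sqrt_mul_norm_Zmap_xpm_sub_le hdal ha haδ.le hδ hsupp (norm_le_maskSup m) hMpos.le hp.le
  have hδ0 : 0 < δ := ha.trans haδ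
  rw [div_le_iff₀ (by positivity), Real.sqrt_mul (Nat.cast_nonneg _)]
  linarith [mul_le_mul_of_nonneg_left hup hCB.le,
    mul_le_mul_of_nonneg_right hlow (Real.sqrt_nonneg a)]
end
end

section
/- Let d be an even positive integer, let δ ≤ d/4 be a positive integer, let 0 < p ≤ q, and set η := d/2 − δ. Then d₁(x⁺, x⁻) = 4q·√(η²q² + 2ηδp²); in particular d₁(x⁺, x⁻) ≥ d·q². -/
/-!
The entries of `x⁺` and `x⁻` agree up to sign, so the two vectors have the same norm `r`. For
vectors of equal norm, expanding in rank-one matrices shows that `M = xx* − yy*` satisfies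
`M³ = κ M` and `tr M² = 2κ` with `κ = r⁴ − |⟨x,y⟩|²`. Every eigenvalue `μ` of the Hermitian
matrix `M` is therefore `0` or `±√κ`, so `|μ| = μ² / √κ` and `d₁(x,y) = tr M² / √κ = 2√κ`.
For `x±` one has `r² = 2(ηq² + δp²)` and `⟨x⁺,x⁻⟩ = 2δp²`, so `κ = 4q²(η²q² + 2ηδp²)`; the
lower bound follows from `√(η²q² + 2ηδp²) ≥ ηq` and `4η ≥ d`.
-/

open scoped BigOperators

noncomputable section

open Matrix Polynomial

lemma Finset.sum_Ico_ite_lt {M : Type*} [AddCommMonoid M] {m a n : ℕ} (hma : m ≤ a)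
    (han : a ≤ n) (c : M) (f : ℕ → M) :
    ∑ i ∈ Finset.Ico m n, (if i < a then c else f i) = (a - m) • c + ∑ i ∈ Finset.Ico a n, f i := by
  rw [← Finset.sum_Ico_consecutive _ hma han, Finset.sum_congr rfl (g := fun _ => c),
    Finset.sum_const, Nat.card_Ico, Finset.sum_congr rfl (g := f)]
  · intro i hi
    rw [if_neg (by simp only [Finset.mem_Ico] at hi; omega)]
  · intro i hi
    rw [if_pos (by simp only [Finset.mem_Ico] at hi; omega)]

lemma abs_eq_sq_div_sqrt_of_pow_three_eq {μ κ : ℝ} (h : μ ^ 3 = κ * μ) : |μ| = μ ^ 2 / √κ := by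
  rcases eq_or_ne μ 0 with rfl | hμ
  · simp
  · have hκ : κ = μ ^ 2 := mul_right_cancel₀ hμ (by rw [← h]; ring)
    rw [hκ, Real.sqrt_sq_eq_abs, ← sq_abs μ, sq, mul_self_div_self]

namespace Matrix.IsHermitian

variable {𝕜 n : Type*} [RCLike 𝕜] [Fintype n] [DecidableEq n] {A : Matrix n n 𝕜}

lemma eval_eigenvalues_eq_zero (hA : A.IsHermitian) {p : ℝ[X]} (hp : aeval A p = 0) (i : n) :
    p.eval (hA.eigenvalues i) = 0 := by
  have : Nonempty n := ⟨i⟩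
  have h := spectrum.subset_polynomial_aeval A p ⟨_, hA.eigenvalues_mem_spectrum_real i, rfl⟩
  rwa [hp, spectrum.zero_eq, Set.mem_singleton_iff] at h

lemma trace_cfc (hA : A.IsHermitian) (f : ℝ → ℝ) :
    (cfc f A).trace = ∑ i, (f (hA.eigenvalues i) : 𝕜) := by
  rw [hA.cfc_eq, IsHermitian.cfc, Unitary.conjStarAlgAut_apply, trace_mul_cycle,
    Unitary.coe_star_mul_self, one_mul, trace_diagonal]
  rfl

lemma trace_sq (hA : A.IsHermitian) : (A ^ 2).trace = ∑ i, (hA.eigenvalues i : 𝕜) ^ 2 := by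
  rw [← cfc_pow_id (R := ℝ) A 2 hA.isSelfAdjoint, hA.trace_cfc]
  push_cast
  rfl

lemma pow_three_eigenvalues_of_pow_three_eq (hA : A.IsHermitian) {κ : ℝ} (h : A ^ 3 = κ • A)
    (i : n) : hA.eigenvalues i ^ 3 = κ * hA.eigenvalues i := by
  have hp : aeval A (X ^ 3 - C κ * X) = 0 := by
    rw [map_sub, map_mul, aeval_C, map_pow, aeval_X, h, Algebra.smul_def, sub_self]
  have := hA.eval_eigenvalues_eq_zero hp i
  simp only [eval_sub, eval_pow, eval_mul, eval_C, eval_X] at this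
  linarith

lemma sum_abs_eigenvalues_of_pow_three_eq (hA : A.IsHermitian) {κ : ℝ} (h : A ^ 3 = κ • A) :
    ∑ i, |hA.eigenvalues i| = (∑ i, hA.eigenvalues i ^ 2) / √κ := by
  rw [Finset.sum_div]
  exact Finset.sum_congr rfl fun i _ =>
    abs_eq_sq_div_sqrt_of_pow_three_eq (hA.pow_three_eigenvalues_of_pow_three_eq h i)

end Matrix.IsHermitian

section VecMulVec

variable {α n : Type*} [CommRing α] [Fintype n]

lemma trace_vecMulVec_mul_vecMulVec (a b c e : n → α) :
    (vecMulVec a b * vecMulVec c e).trace = (b ⬝ᵥ c) * (a ⬝ᵥ e) := by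
  rw [vecMulVec_mul_vecMulVec, trace_vecMulVec, dotProduct_smul, smul_eq_mul]

lemma vecMulVec_mul_vecMulVec_mul_vecMulVec (a b c e f g : n → α) :
    vecMulVec a b * vecMulVec c e * vecMulVec f g = ((b ⬝ᵥ c) * (e ⬝ᵥ f)) • vecMulVec a g := by
  rw [vecMulVec_mul_vecMulVec, vecMulVec_smul, Matrix.smul_mul, vecMulVec_mul_vecMulVec,
    vecMulVec_smul, smul_smul]

variable [DecidableEq n] {x x' y y' : n → α} {r : α}

lemma vecMulVec_sub_vecMulVec_pow_three (hx : x' ⬝ᵥ x = r) (hy : y' ⬝ᵥ y = r) :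
    (vecMulVec x x' - vecMulVec y y') ^ 3 =
      (r ^ 2 - (x' ⬝ᵥ y) * (y' ⬝ᵥ x)) • (vecMulVec x x' - vecMulVec y y') := by
  simp only [pow_three', sub_mul, mul_sub, vecMulVec_mul_vecMulVec_mul_vecMulVec, hx, hy]
  module

lemma trace_vecMulVec_sub_vecMulVec_sq (hx : x' ⬝ᵥ x = r) (hy : y' ⬝ᵥ y = r) :
    ((vecMulVec x x' - vecMulVec y y') ^ 2).trace = 2 * (r ^ 2 - (x' ⬝ᵥ y) * (y' ⬝ᵥ x)) := by
  simp only [sq, sub_mul, mul_sub, trace_sub, trace_vecMulVec_mul_vecMulVec, dotProduct_comm x x',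
    dotProduct_comm y y', dotProduct_comm x y', dotProduct_comm y x', hx, hy]
  ring

end VecMulVec

lemma outerDiff_eq_vecMulVec_sub {d : ℕ} (x y : Fin d → ℂ) :
    outerDiff x y = vecMulVec x (star x) - vecMulVec y (star y) := rfl

lemma star_dotProduct_self_eq_norm2_sq {d : ℕ} (x : Fin d → ℂ) :
    star x ⬝ᵥ x = ((norm2 x ^ 2 : ℝ) : ℂ) := by
  rw [norm2, Real.sq_sqrt (Finset.sum_nonneg fun _ _ => sq_nonneg _)]
  push_cast
  exact Finset.sum_congr rfl fun n _ => Complex.conj_mul' (x n)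

lemma star_dotProduct_eq_innerC {d : ℕ} (x y : Fin d → ℂ) : star y ⬝ᵥ x = innerC x y := by
  rw [dotProduct_comm]
  rfl

lemma d1_eq_of_norm2_eq {d : ℕ} {x y : Fin d → ℂ} (h : norm2 x = norm2 y) :
    d1 x y = 2 * √(norm2 x ^ 4 - ‖innerC x y‖ ^ 2) := by
  set κ := norm2 x ^ 4 - ‖innerC x y‖ ^ 2
  have hA := outerDiff_isHermitian x y
  have hx := star_dotProduct_self_eq_norm2_sq x
  have hy : star y ⬝ᵥ y = ((norm2 x ^ 2 : ℝ) : ℂ) := h ▸ star_dotProduct_self_eq_norm2_sq y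
  have hκ : ((norm2 x ^ 2 : ℝ) : ℂ) ^ 2 - (star x ⬝ᵥ y) * (star y ⬝ᵥ x) = κ := by
    rw [star_dotProduct, star_dotProduct_eq_innerC, Complex.star_def, Complex.conj_mul']
    simp only [κ]
    push_cast
    ring
  have hcube : outerDiff x y ^ 3 = κ • outerDiff x y := by
    rw [outerDiff_eq_vecMulVec_sub, vecMulVec_sub_vecMulVec_pow_three hx hy, hκ, Complex.coe_smul]
  have hsq : ∑ i, hA.eigenvalues i ^ 2 = 2 * κ := by
    have htrace : (outerDiff x y ^ 2).trace = 2 * κ := by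
      rw [outerDiff_eq_vecMulVec_sub, trace_vecMulVec_sub_vecMulVec_sq hx hy, hκ]
    have := hA.trace_sq
    rw [htrace] at this
    exact RCLike.ofReal_injective (K := ℂ) (by push_cast; exact this.symm)
  rw [d1, hA.sum_abs_eigenvalues_of_pow_three_eq hcube, hsq, mul_div_assoc, Real.div_sqrt]

lemma sum_xpm_xpm {M : Type*} [AddCommMonoid M] {d δ : ℕ} (hd : Even d) (hδ : δ ≤ d / 2)
    (p q ε ε' : ℝ) (F : ℂ → ℂ → M) :
    ∑ i, F (xpm d δ p q ε i) (xpm d δ p q ε' i) =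
      (d / 2 - δ) • (F q q + F (ε * q : ℝ) (ε' * q : ℝ)) + (2 * δ) • F p p := by
  set g : ℕ → M := fun i => if i < d / 2 - δ then F q q else if i < d / 2 then F p p
    else if i < d - δ then F (ε * q : ℝ) (ε' * q : ℝ) else F p p
  have hg : ∀ i : Fin d, F (xpm d δ p q ε i) (xpm d δ p q ε' i) = g i := by
    intro i
    simp only [xpm, g]
    split_ifs <;> rfl
  obtain ⟨k, rfl⟩ := hd
  rw [Finset.sum_congr rfl fun i _ => hg i, Fin.sum_univ_eq_sum_range g, Finset.range_eq_Ico]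
  simp only [g]
  rw [Finset.sum_Ico_ite_lt (by omega) (by omega), Finset.sum_Ico_ite_lt (by omega) (by omega),
    Finset.sum_Ico_ite_lt (by omega) (by omega), Finset.sum_const, Nat.card_Ico,
    (by omega : (k + k) / 2 = k), (by omega : k - (k - δ) = δ), (by omega : k + k - δ - k = k - δ),
    (by omega : k + k - (k + k - δ) = δ), Nat.sub_zero, two_mul, add_nsmul, nsmul_add]
  abel

lemma norm2_xpm {d δ : ℕ} (hd : Even d) (hδ : δ ≤ d / 2) (p q : ℝ) {ε : ℝ} (hε : ε ^ 2 = 1) :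
    norm2 (xpm d δ p q ε) = √(2 * (((d / 2 - δ : ℕ) : ℝ) * q ^ 2 + δ * p ^ 2)) := by
  have h := sum_xpm_xpm hd hδ p q ε ε fun z _ => ‖z‖ ^ 2
  rw [norm2, h]
  simp only [Complex.norm_real, Real.norm_eq_abs, sq_abs, mul_pow, hε, nsmul_eq_mul]
  push_cast
  congr 1
  ring

lemma innerC_xpm_one_xpm_neg_one {d δ : ℕ} (hd : Even d) (hδ : δ ≤ d / 2) (p q : ℝ) :
    innerC (xpm d δ p q 1) (xpm d δ p q (-1)) = ((2 * δ * p ^ 2 : ℝ) : ℂ) := by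
  have h := sum_xpm_xpm hd hδ p q 1 (-1) fun z w => z * starRingEnd ℂ w
  rw [innerC, h]
  simp only [Complex.conj_ofReal, nsmul_eq_mul]
  push_cast
  ring

lemma d1_xpm_one_xpm_neg_one {d δ : ℕ} (hd : Even d) (hδ : δ ≤ d / 2) (p : ℝ) {q : ℝ}
    (hq : 0 ≤ q) :
    d1 (xpm d δ p q 1) (xpm d δ p q (-1)) = 4 * q * √(((d / 2 - δ : ℕ) : ℝ) ^ 2 * q ^ 2
      + 2 * ((d / 2 - δ : ℕ) : ℝ) * δ * p ^ 2) := by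
  set η : ℝ := ((d / 2 - δ : ℕ) : ℝ)
  have hsame : norm2 (xpm d δ p q 1) = norm2 (xpm d δ p q (-1)) := by
    rw [norm2_xpm hd hδ p q (one_pow 2), norm2_xpm hd hδ p q (by norm_num)]
  have hnorm : norm2 (xpm d δ p q 1) ^ 4 = (2 * (η * q ^ 2 + δ * p ^ 2)) ^ 2 := by
    rw [norm2_xpm hd hδ p q (one_pow 2), (by ring : 4 = 2 * 2), pow_mul,
      Real.sq_sqrt (by positivity)]
  rw [d1_eq_of_norm2_eq hsame, hnorm, innerC_xpm_one_xpm_neg_one hd hδ, Complex.norm_real,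
    Real.norm_eq_abs, sq_abs,
    (by ring : (2 * (η * q ^ 2 + δ * p ^ 2)) ^ 2 - (2 * δ * p ^ 2) ^ 2
      = (2 * q) ^ 2 * (η ^ 2 * q ^ 2 + 2 * η * δ * p ^ 2)),
    Real.sqrt_mul (sq_nonneg _), Real.sqrt_sq (by positivity)]
  ring

theorem d1_value_general (d δ : ℕ) (p q : ℝ) (hd : Even d)
    (hδd : 4 * δ ≤ d) (hp : 0 < p) (hpq : p ≤ q) :
    d1 (xpm d δ p q 1) (xpm d δ p q (-1))
        = 4 * q * Real.sqrt (((d / 2 - δ : ℕ) : ℝ) ^ 2 * q ^ 2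
            + 2 * ((d / 2 - δ : ℕ) : ℝ) * (δ : ℝ) * p ^ 2) ∧
    (d : ℝ) * q ^ 2 ≤ d1 (xpm d δ p q 1) (xpm d δ p q (-1)) := by
  have hq : 0 ≤ q := hp.le.trans hpq
  have hvalue := d1_xpm_one_xpm_neg_one (δ := δ) hd (by omega) p hq
  refine ⟨hvalue, ?_⟩
  have h4η : (d : ℝ) ≤ 4 * ((d / 2 - δ : ℕ) : ℝ) := by
    exact_mod_cast (by have := hd.two_dvd; omega : d ≤ 4 * (d / 2 - δ))
  set η : ℝ := ((d / 2 - δ : ℕ) : ℝ)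
  have hη : 0 ≤ η := Nat.cast_nonneg _
  have hsqrt : η * q ≤ √(η ^ 2 * q ^ 2 + 2 * η * δ * p ^ 2) :=
    Real.le_sqrt_of_sq_le (by nlinarith [mul_nonneg (mul_nonneg hη δ.cast_nonneg) (sq_nonneg p)])
  rw [hvalue]
  nlinarith [mul_le_mul_of_nonneg_left hsqrt (by positivity : (0 : ℝ) ≤ 4 * q)]

/-- With `η = d/2 - δ`, `d₁(x⁺,x⁻) = 4q√(η²q² + 2ηδp²) ≥ dq²`. -/
theorem d1_value (d δ : ℕ) (p q : ℝ) (hd0 : 0 < d) (hd : Even d) (hδ : 0 < δ)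
    (hδd : 4 * δ ≤ d) (hp : 0 < p) (hpq : p ≤ q) :
    d1 (xpm d δ p q 1) (xpm d δ p q (-1))
        = 4 * q * Real.sqrt (((d / 2 - δ : ℕ) : ℝ) ^ 2 * q ^ 2
            + 2 * ((d / 2 - δ : ℕ) : ℝ) * (δ : ℝ) * p ^ 2) ∧
    (d : ℝ) * q ^ 2 ≤ d1 (xpm d δ p q 1) (xpm d δ p q (-1)) :=
  d1_value_general d δ p q hd hδd hp hpq
end
end

section
/- Let d be an even positive integer, δ ≤ d/4 a positive integer, 0 < p ≤ q, η := d/2 − δ, and let M ∈ ℝ^{d×d} be the 4×4 block matrix with row/column block sizes (η, δ, η, δ) given by M = [[0, 0, q𝟙_{η×η}, 0], [0, 0, p𝟙_{δ×η}, 0], [q𝟙_{η×η}, p𝟙_{η×δ}, 0, p𝟙_{η×δ}], [0, 0, p𝟙_{δ×η}, 0]], where 𝟙_{m×n} denotes the m×n all-ones matrix and 0 denotes all-zero blocks of the appropriate sizes. Then MᵀM has rank at most two, the vectors (0_{1×η}, 0_{1×δ}, 𝟙_{1×η}, 0_{1×δ})ᵀ and (q𝟙_{1×η}, p𝟙_{1×δ},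 0_{1×η}, p𝟙_{1×δ})ᵀ are linearly independent eigenvectors of MᵀM with eigenvalue η(ηq² + 2δp²), and consequently M has exactly two nonzero singular values, both equal to √(η²q² + 2ηδp²). -/
open Matrix

noncomputable section

/-- The block matrix `M` with row/column block sizes `(η, δ, η, δ)`, `η = d/2 - δ`:
`M = [[0,0,q𝟙,0],[0,0,p𝟙,0],[q𝟙,p𝟙,0,p𝟙],[0,0,p𝟙,0]]`.
(0-based index `i` lies in block 1 iff `i < η`, block 2 iff `η ≤ i < d/2`,
block 3 iff `d/2 ≤ i < d - δ`, block 4 iff `d - δ ≤ i`.) -/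
def Mmat (d δ : ℕ) (p q : ℝ) : Matrix (Fin d) (Fin d) ℝ :=
  Matrix.of fun i j =>
    if (i : ℕ) < d / 2 - δ then
      (if d / 2 ≤ (j : ℕ) ∧ (j : ℕ) < d - δ then q else 0)
    else if (i : ℕ) < d / 2 then
      (if d / 2 ≤ (j : ℕ) ∧ (j : ℕ) < d - δ then p else 0)
    else if (i : ℕ) < d - δ then
      (if (j : ℕ) < d / 2 - δ then q
        else if (j : ℕ) < d / 2 then p
        else if d - δ ≤ (j : ℕ) then p else 0)
    else
      (if d / 2 ≤ (j : ℕ) ∧ (j : ℕ) < d - δ then p else 0)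

/-- The vector `(0_{1×η}, 0_{1×δ}, 𝟙_{1×η}, 0_{1×δ})ᵀ`. -/
def v₁ (d δ : ℕ) : Fin d → ℝ :=
  fun i => if d / 2 ≤ (i : ℕ) ∧ (i : ℕ) < d - δ then 1 else 0

/-- The vector `(q𝟙_{1×η}, p𝟙_{1×δ}, 0_{1×η}, p𝟙_{1×δ})ᵀ`. -/
def v₂ (d δ : ℕ) (p q : ℝ) : Fin d → ℝ :=
  fun i => if (i : ℕ) < d / 2 - δ then q
    else if (i : ℕ) < d / 2 then p
    else if (i : ℕ) < d - δ then 0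
    else p

/-!
The matrix is the symmetrized outer product `M = v₁ v₂ᵀ + v₂ v₁ᵀ` of the two orthogonal vectors
`v₁, v₂`. Hence `MᵀM = ‖v₂‖² v₁ v₁ᵀ + ‖v₁‖² v₂ v₂ᵀ` is `λ = ‖v₁‖² ‖v₂‖²` times the orthogonal
projection onto `span {v₁, v₂}`: it has `v₁, v₂` as eigenvectors for `λ`, satisfies
`(MᵀM)² = λ MᵀM`, so its eigenvalues lie in `{0, λ}`, and its trace `2λ` forces exactly two of
them to equal `λ`. With `‖v₁‖² = η` and `‖v₂‖² = ηq² + 2δp²` this is the claim.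
-/

open Finset

lemma Fin.sum_univ_eq_of_four_blocks {M : Type*} [AddCommMonoid M] {n a b c : ℕ}
    (hab : a ≤ b) (hbc : b ≤ c) (hcn : c ≤ n) {f : Fin n → M} {x₁ x₂ x₃ x₄ : M}
    (h₁ : ∀ i : Fin n, (i : ℕ) < a → f i = x₁) (h₂ : ∀ i : Fin n, a ≤ i → (i : ℕ) < b → f i = x₂)
    (h₃ : ∀ i : Fin n, b ≤ i → (i : ℕ) < c → f i = x₃) (h₄ : ∀ i : Fin n, c ≤ (i : ℕ) → f i = x₄) :
    ∑ i, f i = a • x₁ + (b - a) • x₂ + (c - b) • x₃ + (n - c) • x₄ := by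
  have block : ∀ {k l : ℕ} {x : M}, l ≤ n → (∀ i : Fin n, k ≤ i → (i : ℕ) < l → f i = x) →
      ∑ i ∈ Ico k l, (if h : i < n then f ⟨i, h⟩ else 0) = (l - k) • x := fun {k l x} hl hf =>
    calc _ = ∑ i ∈ Ico k l, x := sum_congr rfl fun i hi => by
            obtain ⟨hki, hil⟩ := mem_Ico.mp hi
            rw [dif_pos (hil.trans_le hl), hf _ hki hil]
      _ = (l - k) • x := by rw [Finset.sum_const, Nat.card_Ico]
  rw [sum_fin_eq_sum_range, range_eq_Ico,
    ← sum_Ico_consecutive _ (Nat.zero_le a) (hab.trans (hbc.trans hcn)),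
    ← sum_Ico_consecutive _ hab (hbc.trans hcn), ← sum_Ico_consecutive _ hbc hcn,
    block (hab.trans (hbc.trans hcn)) fun i _ => h₁ i, block (hbc.trans hcn) h₂, block hcn h₃,
    block le_rfl fun i hi _ => h₄ i hi, Nat.sub_zero, add_assoc, add_assoc]

namespace Matrix.IsHermitian

variable {𝕜 n : Type*} [RCLike 𝕜] [Fintype n] [DecidableEq n] {A : Matrix n n 𝕜} {c : ℝ}

lemma eigenvalues_eq_zero_or_eq_of_mul_self_eq_smul (hA : A.IsHermitian) (hAA : A * A = c • A)
    (i : n) : hA.eigenvalues i = 0 ∨ hA.eigenvalues i = c := by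
  set v := ⇑(hA.eigenvectorBasis i)
  have hv : v ≠ 0 := (WithLp.ofLp_eq_zero 2).ne.2 (hA.eigenvectorBasis.orthonormal.ne_zero i)
  have key : (hA.eigenvalues i * hA.eigenvalues i) • v = (c * hA.eigenvalues i) • v :=
    calc _ = A *ᵥ (A *ᵥ v) := by
          rw [hA.mulVec_eigenvectorBasis, mulVec_smul, hA.mulVec_eigenvectorBasis, smul_smul]
      _ = (c • A) *ᵥ v := by rw [mulVec_mulVec, hAA]
      _ = _ := by rw [smul_mulVec, hA.mulVec_eigenvectorBasis, smul_smul]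
  have hsq := smul_left_injective ℝ hv key
  exact (mul_eq_zero.mp (by linear_combination hsq :
    hA.eigenvalues i * (hA.eigenvalues i - c) = 0)).imp_right sub_eq_zero.mp

lemma trace_eq_card_mul_of_mul_self_eq_smul (hA : A.IsHermitian) (hAA : A * A = c • A) :
    A.trace = ((#{i | hA.eigenvalues i = c} : ℝ) * c : ℝ) := by
  rw [hA.trace_eq_sum_eigenvalues, ← RCLike.ofReal_sum, ← Finset.sum_filter_of_ne
    fun i _ hi => (hA.eigenvalues_eq_zero_or_eq_of_mul_self_eq_smul hAA i).resolve_left hi,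
    Finset.sum_congr rfl fun i hi => (Finset.mem_filter.mp hi).2, Finset.sum_const, nsmul_eq_mul]

lemma exists_pair_eigenvalues_of_mul_self_eq_smul (hA : A.IsHermitian) (hAA : A * A = c • A)
    (htr : A.trace = (2 * c : ℝ)) (hc : c ≠ 0) :
    ∃ i j, i ≠ j ∧ hA.eigenvalues i = c ∧ hA.eigenvalues j = c ∧
      ∀ k, k ≠ i → k ≠ j → hA.eigenvalues k = 0 := by
  have hcard : #{i | hA.eigenvalues i = c} = 2 := by
    rw [hA.trace_eq_card_mul_of_mul_self_eq_smul hAA, RCLike.ofReal_inj] at htr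
    exact_mod_cast mul_right_cancel₀ hc htr
  obtain ⟨i, j, hij, hS⟩ := Finset.card_eq_two.mp hcard
  have hmem : ∀ k, hA.eigenvalues k = c ↔ k = i ∨ k = j := fun k => by
    simpa using congrArg (k ∈ ·) hS
  refine ⟨i, j, hij, (hmem i).2 (.inl rfl), (hmem j).2 (.inr rfl), fun k hki hkj => ?_⟩
  exact (hA.eigenvalues_eq_zero_or_eq_of_mul_self_eq_smul hAA k).resolve_right
    fun hk => ((hmem k).1 hk).elim hki hkj

lemma rank_le_two_of_eigenvalues_eq_zero (hA : A.IsHermitian) {i j : n}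
    (h : ∀ k, k ≠ i → k ≠ j → hA.eigenvalues k = 0) : A.rank ≤ 2 := by
  rw [hA.rank_eq_card_non_zero_eigs, Fintype.card_subtype]
  calc #{k | hA.eigenvalues k ≠ 0} ≤ #{i, j} := Finset.card_le_card fun k hk => by
        by_contra hkij
        simp only [Finset.mem_insert, Finset.mem_singleton, not_or] at hkij
        exact (Finset.mem_filter.mp hk).2 (h k hkij.1 hkij.2)
    _ ≤ 2 := Finset.card_le_two

end Matrix.IsHermitian

section SymmOuter

variable {R n : Type*} [CommRing R] [Fintype n] {u w : n → R}

def symmOuter (u w : n → R) : Matrix n n R := vecMulVec u w + vecMulVec w u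

lemma transpose_mul_self_symmOuter (huw : u ⬝ᵥ w = 0) :
    (symmOuter u w)ᵀ * symmOuter u w = (w ⬝ᵥ w) • vecMulVec u u + (u ⬝ᵥ u) • vecMulVec w w := by
  have hwu : w ⬝ᵥ u = 0 := by rw [dotProduct_comm, huw]
  simp only [symmOuter, transpose_add, transpose_vecMulVec, add_mul, mul_add,
    vecMulVec_mul_vecMulVec, huw, hwu, zero_smul, vecMulVec_zero, vecMulVec_smul]
  abel

lemma transpose_mul_self_symmOuter_mulVec_left (huw : u ⬝ᵥ w = 0) :
    ((symmOuter u w)ᵀ * symmOuter u w) *ᵥ u = ((u ⬝ᵥ u) * (w ⬝ᵥ w)) • u := by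
  simp only [transpose_mul_self_symmOuter huw, add_mulVec, smul_mulVec, vecMulVec_mulVec,
    op_smul_eq_smul, huw, dotProduct_comm w u, zero_smul, smul_zero, add_zero, smul_smul, mul_comm]

lemma transpose_mul_self_symmOuter_mulVec_right (huw : u ⬝ᵥ w = 0) :
    ((symmOuter u w)ᵀ * symmOuter u w) *ᵥ w = ((u ⬝ᵥ u) * (w ⬝ᵥ w)) • w := by
  simp only [transpose_mul_self_symmOuter huw, add_mulVec, smul_mulVec, vecMulVec_mulVec,
    op_smul_eq_smul, huw, zero_smul, smul_zero, zero_add, smul_smul]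

lemma transpose_mul_self_symmOuter_sq (huw : u ⬝ᵥ w = 0) :
    (symmOuter u w)ᵀ * symmOuter u w * ((symmOuter u w)ᵀ * symmOuter u w)
      = ((u ⬝ᵥ u) * (w ⬝ᵥ w)) • ((symmOuter u w)ᵀ * symmOuter u w) := by
  have hwu : w ⬝ᵥ u = 0 := by rw [dotProduct_comm, huw]
  simp only [transpose_mul_self_symmOuter huw, add_mul, mul_add, smul_mul_smul_comm,
    vecMulVec_mul_vecMulVec, huw, hwu, zero_smul, vecMulVec_zero, smul_zero, vecMulVec_smul,
    smul_add, smul_smul, add_zero, zero_add]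
  congr 1 <;> congr 1 <;> ring

lemma trace_transpose_mul_self_symmOuter (huw : u ⬝ᵥ w = 0) :
    ((symmOuter u w)ᵀ * symmOuter u w).trace = 2 * ((u ⬝ᵥ u) * (w ⬝ᵥ w)) := by
  rw [transpose_mul_self_symmOuter huw, trace_add, trace_smul, trace_smul, trace_vecMulVec,
    trace_vecMulVec, smul_eq_mul, smul_eq_mul]
  ring

end SymmOuter

lemma linearIndependent_pair_of_dotProduct_eq_zero {K n : Type*} [Field K] [Fintype n]
    {u w : n → K} (hu : u ⬝ᵥ u ≠ 0) (hw : w ⬝ᵥ w ≠ 0) (huw : u ⬝ᵥ w = 0) :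
    LinearIndependent K ![u, w] := by
  rw [LinearIndependent.pair_iff]
  intro s t hst
  have hu' := congrArg (u ⬝ᵥ ·) hst
  have hw' := congrArg (w ⬝ᵥ ·) hst
  simp only [dotProduct_add, dotProduct_smul, dotProduct_zero, smul_eq_mul, huw,
    dotProduct_comm w u, mul_zero, add_zero, zero_add, mul_eq_zero, hu, hw, or_false] at hu' hw'
  exact ⟨hu', hw'⟩

lemma Mmat_eq_symmOuter (d δ : ℕ) (p q : ℝ) :
    Mmat d δ p q = symmOuter (v₁ d δ) (v₂ d δ p q) := by
  ext i j
  simp only [Mmat, symmOuter, of_apply, Matrix.add_apply, vecMulVec_apply, v₁, v₂]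
  split_ifs <;> first | omega | ring

lemma v₁_dotProduct_v₂ (d δ : ℕ) (p q : ℝ) : v₁ d δ ⬝ᵥ v₂ d δ p q = 0 :=
  sum_eq_zero fun i _ => by
    simp only [v₁, v₂]
    split_ifs <;> first | omega | ring

lemma v₁_dotProduct_self {d δ : ℕ} (hd : Even d) (hδ : δ ≤ d / 2) :
    v₁ d δ ⬝ᵥ v₁ d δ = (d / 2 - δ : ℕ) := by
  rw [dotProduct, Fin.sum_univ_eq_of_four_blocks (a := d / 2 - δ) (b := d / 2) (c := d - δ)
    (by omega) (by omega) (by omega) (x₁ := 0) (x₂ := 0) (x₃ := 1) (x₄ := 0)]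
  · simp [show d - δ - d / 2 = d / 2 - δ by grind]
  all_goals intros; simp only [v₁]; split_ifs <;> first | omega | simp

lemma v₂_dotProduct_self {d δ : ℕ} (p q : ℝ) (hδ : δ ≤ d / 2) :
    v₂ d δ p q ⬝ᵥ v₂ d δ p q = (d / 2 - δ : ℕ) * q ^ 2 + 2 * δ * p ^ 2 := by
  rw [dotProduct, Fin.sum_univ_eq_of_four_blocks (a := d / 2 - δ) (b := d / 2) (c := d - δ)
    (by omega) (by omega) (by omega) (x₁ := q ^ 2) (x₂ := p ^ 2) (x₃ := 0) (x₄ := p ^ 2)]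
  · rw [show d / 2 - (d / 2 - δ) = δ by omega, show d - (d - δ) = δ by omega]
    simp only [nsmul_eq_mul, smul_zero]
    ring
  all_goals intros; simp only [v₂]; split_ifs <;> first | omega | ring

theorem Mmat_singular_values_general (d δ : ℕ) (p q : ℝ) (hd : Even d)
    (hδ : 0 < δ) (hδd : 4 * δ ≤ d) (hp : 0 < p) :
    ((Mmat d δ p q)ᵀ * Mmat d δ p q).rank ≤ 2 ∧
    ((Mmat d δ p q)ᵀ * Mmat d δ p q) *ᵥ v₁ d δ
        = (((d / 2 - δ : ℕ) : ℝ) * (((d / 2 - δ : ℕ) : ℝ) * q ^ 2 + 2 * (δ : ℝ) * p ^ 2))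
            • v₁ d δ ∧
    ((Mmat d δ p q)ᵀ * Mmat d δ p q) *ᵥ v₂ d δ p q
        = (((d / 2 - δ : ℕ) : ℝ) * (((d / 2 - δ : ℕ) : ℝ) * q ^ 2 + 2 * (δ : ℝ) * p ^ 2))
            • v₂ d δ p q ∧
    LinearIndependent ℝ ![v₁ d δ, v₂ d δ p q] ∧
    ∀ h : ((Mmat d δ p q)ᵀ * Mmat d δ p q).IsHermitian,
      ∃ i j : Fin d, i ≠ j ∧
        h.eigenvalues i
          = ((d / 2 - δ : ℕ) : ℝ) * (((d / 2 - δ : ℕ) : ℝ) * q ^ 2 + 2 * (δ : ℝ) * p ^ 2) ∧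
        h.eigenvalues j
          = ((d / 2 - δ : ℕ) : ℝ) * (((d / 2 - δ : ℕ) : ℝ) * q ^ 2 + 2 * (δ : ℝ) * p ^ 2) ∧
        (∀ k, k ≠ i → k ≠ j → h.eigenvalues k = 0) ∧
        Real.sqrt (h.eigenvalues i)
          = Real.sqrt (((d / 2 - δ : ℕ) : ℝ) ^ 2 * q ^ 2
              + 2 * ((d / 2 - δ : ℕ) : ℝ) * (δ : ℝ) * p ^ 2) ∧
        Real.sqrt (h.eigenvalues j)
          = Real.sqrt (((d / 2 - δ : ℕ) : ℝ) ^ 2 * q ^ 2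
              + 2 * ((d / 2 - δ : ℕ) : ℝ) * (δ : ℝ) * p ^ 2) := by
  have hδ₂ : δ ≤ d / 2 := by omega
  have h₁₂ := v₁_dotProduct_v₂ d δ p q
  have h₁₁ := v₁_dotProduct_self hd hδ₂
  have h₂₂ := v₂_dotProduct_self p q hδ₂
  have hη : (0 : ℝ) < (d / 2 - δ : ℕ) := by exact_mod_cast (by omega : 0 < d / 2 - δ)
  have hc : ((d / 2 - δ : ℕ) : ℝ) * ((d / 2 - δ : ℕ) * q ^ 2 + 2 * δ * p ^ 2) ≠ 0 := by
    positivity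
  have hsq := transpose_mul_self_symmOuter_sq h₁₂
  have htr := trace_transpose_mul_self_symmOuter h₁₂
  rw [h₁₁, h₂₂] at hsq htr
  rw [Mmat_eq_symmOuter]
  have hG := isHermitian_conjTranspose_mul_self (symmOuter (v₁ d δ) (v₂ d δ p q))
  rw [conjTranspose_eq_transpose_of_trivial] at hG
  obtain ⟨i, j, hij, hi, hj, hk⟩ := hG.exists_pair_eigenvalues_of_mul_self_eq_smul hsq htr hc
  refine ⟨hG.rank_le_two_of_eigenvalues_eq_zero hk,
    by rw [transpose_mul_self_symmOuter_mulVec_left h₁₂, h₁₁, h₂₂],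
    by rw [transpose_mul_self_symmOuter_mulVec_right h₁₂, h₁₁, h₂₂],
    linearIndependent_pair_of_dotProduct_eq_zero (by rw [h₁₁]; positivity)
      (by rw [h₂₂]; positivity) h₁₂,
    fun h => ⟨i, j, hij, hi, hj, hk, ?_, ?_⟩⟩
  · rw [hi]; ring_nf
  · rw [hj]; ring_nf

/-- `MᵀM` has rank at most two, `v₁` and `v₂` are linearly independent
eigenvectors of `MᵀM` with eigenvalue `η(ηq² + 2δp²)`, and `M` has exactly two nonzero
singular values, both equal to `√(η²q² + 2ηδp²)`. -/
theorem Mmat_singular_values (d δ : ℕ) (p q : ℝ) (hd0 : 0 < d) (hd : Even d)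
    (hδ : 0 < δ) (hδd : 4 * δ ≤ d) (hp : 0 < p) (hpq : p ≤ q) :
    ((Mmat d δ p q)ᵀ * Mmat d δ p q).rank ≤ 2 ∧
    ((Mmat d δ p q)ᵀ * Mmat d δ p q) *ᵥ v₁ d δ
        = (((d / 2 - δ : ℕ) : ℝ) * (((d / 2 - δ : ℕ) : ℝ) * q ^ 2 + 2 * (δ : ℝ) * p ^ 2))
            • v₁ d δ ∧
    ((Mmat d δ p q)ᵀ * Mmat d δ p q) *ᵥ v₂ d δ p q
        = (((d / 2 - δ : ℕ) : ℝ) * (((d / 2 - δ : ℕ) : ℝ) * q ^ 2 + 2 * (δ : ℝ) * p ^ 2))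
            • v₂ d δ p q ∧
    LinearIndependent ℝ ![v₁ d δ, v₂ d δ p q] ∧
    ∀ h : ((Mmat d δ p q)ᵀ * Mmat d δ p q).IsHermitian,
      ∃ i j : Fin d, i ≠ j ∧
        h.eigenvalues i
          = ((d / 2 - δ : ℕ) : ℝ) * (((d / 2 - δ : ℕ) : ℝ) * q ^ 2 + 2 * (δ : ℝ) * p ^ 2) ∧
        h.eigenvalues j
          = ((d / 2 - δ : ℕ) : ℝ) * (((d / 2 - δ : ℕ) : ℝ) * q ^ 2 + 2 * (δ : ℝ) * p ^ 2) ∧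
        (∀ k, k ≠ i → k ≠ j → h.eigenvalues k = 0) ∧
        Real.sqrt (h.eigenvalues i)
          = Real.sqrt (((d / 2 - δ : ℕ) : ℝ) ^ 2 * q ^ 2
              + 2 * ((d / 2 - δ : ℕ) : ℝ) * (δ : ℝ) * p ^ 2) ∧
        Real.sqrt (h.eigenvalues j)
          = Real.sqrt (((d / 2 - δ : ℕ) : ℝ) ^ 2 * q ^ 2
              + 2 * ((d / 2 - δ : ℕ) : ℝ) * (δ : ℝ) * p ^ 2) :=
  Mmat_singular_values_general d δ p q hd hδ hδd hp
end
end

section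
/- There is a universal constant C > 0 with the following property. Let d be an even positive integer, δ ≤ d/4 a positive integer, a and L positive integers with d = aL and 1 ≤ a < δ, m_1,…,m_K ∈ ℂ^d masks whose nonzero entries all lie in positions {1,…,δ}, and 0 < p ≤ q. Then ‖Z(x⁺) − Z(x⁻)‖₂² ≤ C·K·p²·‖m‖_∞²·δ³/a, where ‖m‖_∞ := max_{1≤k≤K} ‖m_k‖_∞. -/
open scoped BigOperators

noncomputable section

/-!
`x⁺` and `x⁻` differ only by a sign on the block `d / 2 ≤ n < d - δ` (positions counted from
`0`). The shifted mask `S_{ℓa} m_k` is supported on a cyclic window of `δ` consecutive positions.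
If the window lies inside the block or misses it, the inner products with `x⁺` and `x⁻` agree up
to sign, so the entry of `Z(x⁺) - Z(x⁻)` vanishes. Otherwise the window straddles an end of the
block and sees only the values `±q` inside it and `p` next to it, so the entry is at most
`|⟨S_{ℓa} m_k, x⁺ + x⁻⟩| ≤ 2 p δ ‖m‖_∞`. The straddling shifts `ℓa` lie in two intervals of
length `δ`, each holding at most `δ / a + 1 ≤ 2 δ / a` multiples of `a`.
-/

open Finset

/-- The residues `r` of shifts for which the support `{n | (n + r) % d < δ}` of a shifted mask
straddles one of the two ends `d / 2` and `d - δ` of the block on which `x⁺` and `x⁻` differ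
in sign. -/
def flipBoundaryShifts (d δ : ℕ) : Finset ℕ :=
  Ioo δ (2 * δ) ∪ Ioo (d / 2) (d / 2 + δ)

section innerC

variable {d : ℕ}

lemma innerC_add_right (u x y : Fin d → ℂ) : innerC u (x + y) = innerC u x + innerC u y := by
  simp only [innerC, Pi.add_apply, map_add, mul_add, sum_add_distrib]

lemma innerC_neg_right (u y : Fin d → ℂ) : innerC u (-y) = -innerC u y := by
  simp only [innerC, Pi.neg_apply, map_neg, mul_neg, sum_neg_distrib]

lemma innerC_congr_right {u x y : Fin d → ℂ} (h : ∀ n, u n ≠ 0 → x n = y n) :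
    innerC u x = innerC u y := by
  refine sum_congr rfl fun n _ => ?_
  by_cases hn : u n = 0
  · simp [hn]
  · rw [h n hn]

lemma innerC_eq_neg_of_eq_neg {u x y : Fin d → ℂ} (h : ∀ n, u n ≠ 0 → x n = -y n) :
    innerC u x = -innerC u y :=
  (innerC_congr_right h).trans (innerC_neg_right u y)

lemma abs_norm_innerC_sub_le (u x y : Fin d → ℂ) :
    |‖innerC u x‖ - ‖innerC u y‖| ≤ ‖innerC u (x + y)‖ := by
  simpa [innerC_add_right] using abs_norm_sub_norm_le (innerC u x) (-innerC u y)

lemma norm_innerC_le_of_support {u x : Fin d → ℂ} {M B : ℝ} (s : Finset (Fin d))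
    (hu : ∀ n, u n ≠ 0 → n ∈ s) (hM : ∀ n, ‖u n‖ ≤ M) (hB : ∀ n ∈ s, ‖x n‖ ≤ B) :
    ‖innerC u x‖ ≤ #s * (M * B) := by
  have hsum : ∑ n ∈ s, u n * starRingEnd ℂ (x n) = innerC u x :=
    sum_subset (subset_univ s) fun n _ hn => by rw [not_imp_comm.1 (hu n) hn, zero_mul]
  rw [← hsum, ← nsmul_eq_mul]
  refine (norm_sum_le _ _).trans (sum_le_card_nsmul _ _ _ fun n hn => ?_)
  rw [norm_mul, Complex.norm_conj]
  exact mul_le_mul (hM n) (hB n hn) (norm_nonneg _) ((norm_nonneg _).trans (hM n))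

end innerC

lemma shift_natCast_apply {d : ℕ} (c : ℕ) (v : Fin d → ℂ) (n : Fin d) :
    shift (c : ℤ) v n = v ⟨(n + c) % d, Nat.mod_lt _ n.pos⟩ := by
  simp only [shift, intToFin]
  congr

lemma card_filter_add_mod_lt_le (d δ c : ℕ) : #{n : Fin d | (n + c) % d < δ} ≤ δ := by
  simpa using card_le_card_of_injOn (t := range δ) (fun n : Fin d => (n + c) % d)
    (fun n hn => by simpa using hn)
    fun n _ n' _ h => Fin.ext <| by
      simpa [Nat.ModEq, Nat.mod_eq_of_lt] using Nat.ModEq.add_right_cancel' c h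

lemma add_lt_or_lt_add_of_add_mod_lt {n r d δ : ℕ} (hn : n < d) (hr : r < d)
    (h : (n + r) % d < δ) : n + r < δ ∨ d ≤ n + r ∧ n + r < d + δ := by
  rcases lt_or_ge (n + r) d with hlt | hge
  · rw [Nat.mod_eq_of_lt hlt] at h
    exact Or.inl h
  · rw [Nat.mod_eq_sub_mod hge, Nat.mod_eq_of_lt (by omega)] at h
    omega

section xpm

variable {d δ : ℕ} {p q : ℝ} {n : Fin d}

lemma xpm_one_eq (h : n < d / 2 ∨ d - δ ≤ n) : xpm d δ p q 1 n = xpm d δ p q (-1) n := by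
  unfold xpm
  split_ifs <;> first | rfl | omega

lemma xpm_one_eq_neg (h : d / 2 ≤ n ∧ n < d - δ) :
    xpm d δ p q 1 n = -xpm d δ p q (-1) n := by
  unfold xpm
  split_ifs <;> first | omega | push_cast; ring

lemma norm_xpm_add_le (hp : 0 ≤ p) (h : d / 2 - δ ≤ n) :
    ‖(xpm d δ p q 1 + xpm d δ p q (-1)) n‖ ≤ 2 * p := by
  have hpp : ‖(p : ℂ) + p‖ ≤ 2 * p := by
    rw [← two_mul, norm_mul, Complex.norm_real, Real.norm_of_nonneg hp, Complex.norm_two]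
  simp only [xpm, Pi.add_apply]
  split_ifs
  · omega
  · exact hpp
  · simp [hp]
  · exact hpp

end xpm

section shiftedMask

variable {d δ : ℕ} {v : Fin d → ℂ}

lemma lt_of_shift_ne_zero (hv : ∀ j, v j ≠ 0 → (j : ℕ) < δ) {c : ℕ} {n : Fin d}
    (hn : shift (c : ℤ) v n ≠ 0) : (n + c) % d < δ := by
  rw [shift_natCast_apply] at hn
  exact hv _ hn

lemma norm_innerC_shift_xpm_eq {p q : ℝ} (hd : Even d) (hv : ∀ j, v j ≠ 0 → (j : ℕ) < δ)
    {c : ℕ} (hc : c % d ∉ flipBoundaryShifts d δ) :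
    ‖innerC (shift (c : ℤ) v) (xpm d δ p q 1)‖ =
      ‖innerC (shift (c : ℤ) v) (xpm d δ p q (-1))‖ := by
  have hwin (n : Fin d) (hn : shift (c : ℤ) v n ≠ 0) :
      n < d ∧ (n + c % d < δ ∨ d ≤ n + c % d ∧ n + c % d < d + δ) :=
    ⟨n.isLt, add_lt_or_lt_add_of_add_mod_lt n.isLt (Nat.mod_lt _ n.pos)
      (by rw [Nat.add_mod_mod]; exact lt_of_shift_ne_zero hv hn)⟩
  simp only [flipBoundaryShifts, mem_union, mem_Ioo] at hc
  have hd2 := Nat.even_iff.1 hd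
  by_cases hflip : 2 * δ ≤ c % d ∧ c % d ≤ d / 2
  · rw [innerC_eq_neg_of_eq_neg fun n hn => xpm_one_eq_neg (by have := hwin n hn; omega),
      norm_neg]
  · congr 1
    exact innerC_congr_right fun n hn => xpm_one_eq (by have := hwin n hn; omega)

lemma abs_norm_innerC_shift_xpm_sub_le (hv : ∀ j, v j ≠ 0 → (j : ℕ) < δ) {M : ℝ}
    (hM : ∀ j, ‖v j‖ ≤ M) (hM0 : 0 ≤ M) {p q : ℝ} (hp : 0 ≤ p) {c : ℕ}
    (hc : c % d ∈ flipBoundaryShifts d δ) :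
    |‖innerC (shift (c : ℤ) v) (xpm d δ p q 1)‖ -
        ‖innerC (shift (c : ℤ) v) (xpm d δ p q (-1))‖| ≤ δ * (M * (2 * p)) := by
  simp only [flipBoundaryShifts, mem_union, mem_Ioo] at hc
  calc _ ≤ ‖innerC (shift (c : ℤ) v) (xpm d δ p q 1 + xpm d δ p q (-1))‖ :=
        abs_norm_innerC_sub_le _ _ _
    _ ≤ #{n : Fin d | (n + c) % d < δ} * (M * (2 * p)) := by
        refine norm_innerC_le_of_support _ (fun n hn => ?_) (fun n => ?_) fun n hn => ?_
        · simpa using lt_of_shift_ne_zero hv hn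
        · rw [shift_natCast_apply]
          exact hM _
        · rw [mem_filter, ← Nat.add_mod_mod] at hn
          have := add_lt_or_lt_add_of_add_mod_lt n.isLt (Nat.mod_lt c n.pos) hn.2
          exact norm_xpm_add_le hp (by omega)
    _ ≤ δ * (M * (2 * p)) := by
        gcongr
        exact_mod_cast card_filter_add_mod_lt_le d δ c

end shiftedMask

lemma card_filter_dvd_Ioo_le (a x w : ℕ) : #{n ∈ Ioo x (x + w) | a ∣ n} ≤ w / a + 1 := by
  have hsplit : #{n ∈ Ioc 0 x | a ∣ n} + #{n ∈ Ioc x (x + w) | a ∣ n} = (x + w) / a := by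
    rw [← card_union_of_disjoint (disjoint_filter_filter (Ioc_disjoint_Ioc_of_le le_rfl)),
      ← filter_union, Ioc_union_Ioc_eq_Ioc (Nat.zero_le x) (Nat.le_add_right x w),
      Nat.Ioc_filter_dvd_card_eq_div]
  rw [Nat.Ioc_filter_dvd_card_eq_div] at hsplit
  have := Nat.add_div_le_div_add_div_add_one x w a
  have := card_le_card (filter_subset_filter (a ∣ ·) (Ioo_subset_Ioc_self (a := x) (b := x + w)))
  omega

lemma card_filter_mul_mod_mem_le {a : ℕ} (ha : 0 < a) (L : ℕ) (S : Finset ℕ) :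
    #{ℓ : Fin L | (ℓ + 1) * a % (a * L) ∈ S} ≤ #{n ∈ S | a ∣ n} := by
  have hmod (ℓ : Fin L) : (ℓ + 1) * a % (a * L) = (ℓ + 1) % L * a := by
    rw [mul_comm a L, Nat.mul_mod_mul_right]
  have hwrap (ℓ : Fin L) : (ℓ + 1) % L = ℓ + 1 ∨ ℓ + 1 = L ∧ (ℓ + 1) % L = 0 := by
    rcases (show (ℓ : ℕ) + 1 ≤ L from ℓ.isLt).lt_or_eq with h | h
    · exact Or.inl (Nat.mod_eq_of_lt h)
    · exact Or.inr ⟨h, by rw [h, Nat.mod_self]⟩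
  refine card_le_card_of_injOn (fun ℓ : Fin L => (ℓ + 1) * a % (a * L)) (fun ℓ hℓ => ?_)
    fun ℓ _ ℓ' _ h => ?_
  · rw [mem_coe, mem_filter] at hℓ ⊢
    exact ⟨hℓ.2, (Nat.dvd_mod_iff (dvd_mul_right a L)).2 (dvd_mul_left a _)⟩
  · simp only [hmod] at h
    have := Nat.eq_of_mul_eq_mul_right ha h
    have := hwrap ℓ
    have := hwrap ℓ'
    exact Fin.ext (by omega)

lemma card_flipBoundaryShifts_le {d a L : ℕ} (δ : ℕ) (hd : d = a * L) (ha : 0 < a)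
    (haδ : a ≤ δ) :
    (#{ℓ : Fin L | (ℓ + 1) * a % d ∈ flipBoundaryShifts d δ} : ℝ) ≤ 4 * δ / a := by
  have hcount : #{ℓ : Fin L | (ℓ + 1) * a % d ∈ flipBoundaryShifts d δ} ≤ 4 * (δ / a) := by
    subst hd
    have h₁ := card_filter_dvd_Ioo_le a δ δ
    rw [← two_mul] at h₁
    have h₂ := card_filter_dvd_Ioo_le a (a * L / 2) δ
    have h₃ := card_union_le {n ∈ Ioo δ (2 * δ) | a ∣ n}
      {n ∈ Ioo (a * L / 2) (a * L / 2 + δ) | a ∣ n}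
    have h₄ : 1 ≤ δ / a := (Nat.one_le_div_iff ha).2 haδ
    rw [← filter_union] at h₃
    have := card_filter_mul_mod_mem_le ha L (flipBoundaryShifts (a * L) δ)
    unfold flipBoundaryShifts at this ⊢
    omega
  calc (#{ℓ : Fin L | (ℓ + 1) * a % d ∈ flipBoundaryShifts d δ} : ℝ) ≤ 4 * (δ / a : ℕ) := by
        exact_mod_cast hcount
    _ ≤ 4 * δ / a := by
        rw [mul_div_assoc]
        gcongr
        exact Nat.cast_div_le

lemma maskSup_nonneg {d K : ℕ} (m : Fin K → Fin d → ℂ) : 0 ≤ maskSup m :=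
  Real.iSup_nonneg fun _ => Real.iSup_nonneg fun _ => norm_nonneg _

lemma sq_Zmap_xpm_sub_le {d δ a L K : ℕ} {m : Fin K → Fin d → ℂ} {p q : ℝ} (hd : Even d)
    (hm : ∀ k n, m k n ≠ 0 → (n : ℕ) < δ) (hp : 0 ≤ p) (k : Fin K) (ℓ : Fin L) :
    (Zmap L m a (xpm d δ p q 1) (k, ℓ) - Zmap L m a (xpm d δ p q (-1)) (k, ℓ)) ^ 2
      ≤ if (ℓ + 1) * a % d ∈ flipBoundaryShifts d δ then (δ * (maskSup m * (2 * p))) ^ 2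
        else 0 := by
  split_ifs with hc
  · rw [← sq_abs]
    exact pow_le_pow_left₀ (abs_nonneg _) (abs_norm_innerC_shift_xpm_sub_le (hm k)
      (norm_le_maskSup m k) (maskSup_nonneg m) hp hc) 2
  · have hZ : Zmap L m a (xpm d δ p q 1) (k, ℓ) = Zmap L m a (xpm d δ p q (-1)) (k, ℓ) :=
      norm_innerC_shift_xpm_eq hd (hm k) hc
    rw [hZ, sub_self, zero_pow two_ne_zero]

/-- `‖Z(x⁺) - Z(x⁻)‖₂² ≤ C K p² ‖m‖_∞² δ³ / a`. -/
theorem Z_diff_bound : ∃ C : ℝ, 0 < C ∧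
    ∀ (d δ a L K : ℕ) (m : Fin K → Fin d → ℂ) (p q : ℝ),
      0 < d → Even d → 0 < δ → 4 * δ ≤ d → 0 < a → 0 < L → d = a * L → 1 ≤ a → a < δ →
      (∀ k n, m k n ≠ 0 → (n : ℕ) < δ) →
      0 < p → p ≤ q →
      ‖Zmap L m a (xpm d δ p q 1) - Zmap L m a (xpm d δ p q (-1))‖ ^ 2
        ≤ C * (K : ℝ) * p ^ 2 * maskSup m ^ 2 * (δ : ℝ) ^ 3 / (a : ℝ) := by
  refine ⟨16, by norm_num, ?_⟩
  intro d δ a L K m p q _ hd _ _ ha _ hdal _ haδ hm hp _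
  calc ‖Zmap L m a (xpm d δ p q 1) - Zmap L m a (xpm d δ p q (-1))‖ ^ 2
      = ∑ k, ∑ ℓ,
          (Zmap L m a (xpm d δ p q 1) (k, ℓ) - Zmap L m a (xpm d δ p q (-1)) (k, ℓ)) ^ 2 :=
        (EuclideanSpace.real_norm_sq_eq _).trans (Fintype.sum_prod_type _)
    _ ≤ ∑ _k : Fin K, ∑ ℓ : Fin L, if (ℓ + 1) * a % d ∈ flipBoundaryShifts d δ then
          (δ * (maskSup m * (2 * p))) ^ 2 else 0 := by
        gcongr with k _ ℓ _
        exact sq_Zmap_xpm_sub_le hd hm hp.le k ℓ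
    _ = K * (#{ℓ : Fin L | (ℓ + 1) * a % d ∈ flipBoundaryShifts d δ} *
          (δ * (maskSup m * (2 * p))) ^ 2) := by
        simp [sum_ite]
    _ ≤ K * (4 * δ / a * (δ * (maskSup m * (2 * p))) ^ 2) := by
        gcongr
        exact card_flipBoundaryShifts_le δ hdal ha haδ.le
    _ = 16 * K * p ^ 2 * maskSup m ^ 2 * δ ^ 3 / a := by ring
end
end
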